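/- arXiv:2308.07340 — 3 statements merged into one kernel-verified Lean document; each statement's English description precedes it below -/
import Mathlib

section
/- Conditioning decreases min-entropy by at most the probability penalty: for a tripartite density matrix ρ_{ABC} and an operator M on C with M†M ≤ I, setting p = Tr(M ρ M†) > 0 and ρ̂ = M ρ M† / p, the conditional min-entropy satisfies H_min(A|B)_{ρ̂} ≥ H_min(A|B)_ρ − log(1/p). -/
/-!
Write `1 - M†M = N†N`. Tracing out `C` splits `ρ_AB` as `Tr_C(M ρ M†) + Tr_C(N ρ N†)`, so
`p ρ̂_AB = Tr_C(M ρ M†) ≤ ρ_AB`. Hence every `λ` with `ρ_AB ≤ 2^λ (1_A ⊗ σ_B)` gives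
`ρ̂_AB ≤ 2^(λ + log(1/p)) (1_A ⊗ σ_B)`, and taking infima over `λ` and `σ_B` gives the bound.
-/

open Matrix Kronecker
open scoped ComplexOrder

/-- Max-divergence `D_max(A‖B) = min{λ : A ≤ 2^λ B}` in the Löwner order. -/
noncomputable def dmax {n : Type*} [Fintype n] (A B : Matrix n n ℂ) : ℝ :=
  sInf {l : ℝ | ((2 : ℝ) ^ l • B - A).PosSemidef}

/-- Conditional min-entropy `H_min(A|B)_ρ = −inf_{σ_B} D_max(ρ_{AB} ‖ 1_A ⊗ σ_B)`,
the infimum over density matrices `σ_B`. -/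
noncomputable def hmin {α β : Type*} [Fintype α] [Fintype β] [DecidableEq α] [DecidableEq β]
    (ρ : Matrix (α × β) (α × β) ℂ) : ℝ :=
  - sInf {x : ℝ | ∃ σ : Matrix β β ℂ, σ.PosSemidef ∧ σ.trace = 1 ∧
      x = dmax ρ ((1 : Matrix α α ℂ) ⊗ₖ σ)}

/-- Partial trace over the second (right) tensor factor. -/
noncomputable def ptraceRight {α β : Type*} [Fintype β]
    (ρ : Matrix (α × β) (α × β) ℂ) : Matrix α α ℂ :=
  Matrix.of fun a a' => ∑ b, ρ (a, b) (a', b)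

section PartialTrace

variable {α β : Type*} [Fintype β]

lemma ptraceRight_add (ρ τ : Matrix (α × β) (α × β) ℂ) :
    ptraceRight (ρ + τ) = ptraceRight ρ + ptraceRight τ := by
  ext a a'
  simp [ptraceRight, Finset.sum_add_distrib]

lemma ptraceRight_smul (c : ℂ) (ρ : Matrix (α × β) (α × β) ℂ) :
    ptraceRight (c • ρ) = c • ptraceRight ρ := by
  ext a a'
  simp [ptraceRight, Finset.mul_sum]

lemma trace_ptraceRight [Fintype α] (ρ : Matrix (α × β) (α × β) ℂ) :
    (ptraceRight ρ).trace = ρ.trace := by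
  simp [Matrix.trace, ptraceRight, Fintype.sum_prod_type]

lemma ptraceRight_eq_sum_submatrix (ρ : Matrix (α × β) (α × β) ℂ) :
    ptraceRight ρ = ∑ b, ρ.submatrix (·, b) (·, b) := by
  ext a a'
  simp [ptraceRight, Matrix.sum_apply]

lemma posSemidef_ptraceRight {ρ : Matrix (α × β) (α × β) ℂ} (hρ : ρ.PosSemidef) :
    (ptraceRight ρ).PosSemidef := by
  rw [ptraceRight_eq_sum_submatrix]
  exact posSemidef_sum _ fun b _ => hρ.submatrix _

lemma ptraceRight_one_kronecker_mul_comm [Fintype α] [DecidableEq α] (X : Matrix β β ℂ)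
    (ρ : Matrix (α × β) (α × β) ℂ) :
    ptraceRight (((1 : Matrix α α ℂ) ⊗ₖ X) * ρ)
      = ptraceRight (ρ * ((1 : Matrix α α ℂ) ⊗ₖ X)) := by
  ext a a'
  simp only [ptraceRight, of_apply, mul_apply, kroneckerMap_apply, one_apply, ite_mul, one_mul,
    zero_mul, mul_ite, mul_zero, Fintype.sum_prod_type, Finset.sum_ite_irrel,
    Finset.sum_const_zero, Finset.sum_ite_eq, Finset.sum_ite_eq', Finset.mem_univ, ↓reduceIte]
  rw [Finset.sum_comm]
  exact Finset.sum_congr rfl fun _ _ => Finset.sum_congr rfl fun _ _ => mul_comm _ _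

lemma ptraceRight_conj_one_kronecker [Fintype α] [DecidableEq α] (M : Matrix β β ℂ)
    (ρ : Matrix (α × β) (α × β) ℂ) :
    ptraceRight (((1 : Matrix α α ℂ) ⊗ₖ M) * ρ * ((1 : Matrix α α ℂ) ⊗ₖ M)ᴴ)
      = ptraceRight (ρ * ((1 : Matrix α α ℂ) ⊗ₖ (Mᴴ * M))) := by
  rw [Matrix.mul_assoc, ptraceRight_one_kronecker_mul_comm, Matrix.mul_assoc,
    conjTranspose_kronecker, conjTranspose_one, ← mul_kronecker_mul, Matrix.one_mul]

open scoped MatrixOrder in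
lemma posSemidef_ptraceRight_sub_conj [Fintype α] [DecidableEq α] [DecidableEq β]
    {ρ : Matrix (α × β) (α × β) ℂ} (hρ : ρ.PosSemidef) {M : Matrix β β ℂ}
    (hM : (1 - Mᴴ * M).PosSemidef) :
    (ptraceRight ρ -
      ptraceRight (((1 : Matrix α α ℂ) ⊗ₖ M) * ρ * ((1 : Matrix α α ℂ) ⊗ₖ M)ᴴ)).PosSemidef := by
  obtain ⟨N, hN⟩ := CStarAlgebra.nonneg_iff_eq_star_mul_self.mp hM.nonneg
  have hMN : Mᴴ * M + Nᴴ * N = 1 := by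
    rw [← star_eq_conjTranspose N, ← hN]; abel
  have hsplit : ptraceRight ρ
      = ptraceRight (((1 : Matrix α α ℂ) ⊗ₖ M) * ρ * ((1 : Matrix α α ℂ) ⊗ₖ M)ᴴ)
        + ptraceRight (((1 : Matrix α α ℂ) ⊗ₖ N) * ρ * ((1 : Matrix α α ℂ) ⊗ₖ N)ᴴ) := by
    rw [ptraceRight_conj_one_kronecker, ptraceRight_conj_one_kronecker, ← ptraceRight_add,
      ← Matrix.mul_add, ← kronecker_add, hMN, one_kronecker_one, Matrix.mul_one]
  rw [hsplit, add_sub_cancel_left]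
  exact posSemidef_ptraceRight (hρ.mul_mul_conjTranspose_same _)

end PartialTrace

open scoped MatrixOrder in
lemma Matrix.PosSemidef.one_sub_of_trace_eq_one {n : Type*} [Fintype n] [DecidableEq n]
    {A : Matrix n n ℂ} (hA : A.PosSemidef) (htr : A.trace = 1) : (1 - A).PosSemidef := by
  rw [← Matrix.le_iff]
  refine CFC.le_one (R := ℝ) (fun x hx => ?_) hA.1.isSelfAdjoint
  rw [hA.1.spectrum_real_eq_range_eigenvalues] at hx
  obtain ⟨i, rfl⟩ := hx
  have hsum : ∑ j, hA.1.eigenvalues j = 1 := by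
    have := hA.1.trace_eq_sum_eigenvalues
    rw [htr] at this
    apply_fun Complex.re at this
    simpa using this.symm
  rw [← hsum]
  exact Finset.single_le_sum (fun j _ => hA.eigenvalues_nonneg j) (Finset.mem_univ i)

section MaxDivergence

variable {n : Type*} [Fintype n]

def dmaxSet (A B : Matrix n n ℂ) : Set ℝ := {l : ℝ | ((2 : ℝ) ^ l • B - A).PosSemidef}

lemma dmax_eq_sInf_dmaxSet (A B : Matrix n n ℂ) : dmax A B = sInf (dmaxSet A B) := rfl

lemma dmax_eq_zero_of_dmaxSet_eq_empty {A B : Matrix n n ℂ} (h : dmaxSet A B = ∅) :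
    dmax A B = 0 := by
  rw [dmax_eq_sInf_dmaxSet, h, Real.sInf_empty]

lemma neg_logb_le_of_mem_dmaxSet {A B : Matrix n n ℂ} {t l : ℝ} (hA : A.trace = 1)
    (hB : B.trace = t) (hl : l ∈ dmaxSet A B) : -Real.logb 2 t ≤ l := by
  have htrace : (0 : ℂ) ≤ (((2 : ℝ) ^ l * t - 1 : ℝ) : ℂ) := by
    simpa [trace_sub, trace_smul, hA, hB, Complex.real_smul] using hl.trace_nonneg
  have hlt : 1 ≤ (2 : ℝ) ^ l * t := sub_nonneg.mp (Complex.zero_le_real.mp htrace)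
  have ht : 0 < t := pos_of_mul_pos_right (one_pos.trans_le hlt) (by positivity)
  rw [← Real.logb_inv, Real.logb_le_iff_le_rpow one_lt_two (inv_pos.mpr ht),
    inv_le_iff_one_le_mul₀ ht]
  linarith

lemma bddBelow_dmaxSet {A B : Matrix n n ℂ} {t : ℝ} (hA : A.trace = 1) (hB : B.trace = t) :
    BddBelow (dmaxSet A B) :=
  ⟨_, fun _ => neg_logb_le_of_mem_dmaxSet hA hB⟩

lemma dmax_le_dmax_add {A A' B : Matrix n n ℂ} {c : ℝ}
    (hle : ((2 : ℝ) ^ c • A - A').PosSemidef)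
    (hne : (dmaxSet A B).Nonempty) (hbdd : BddBelow (dmaxSet A' B)) :
    dmax A' B ≤ dmax A B + c := by
  rw [← sub_le_iff_le_add]
  refine le_csInf hne fun l hl => sub_le_iff_le_add.mpr (csInf_le hbdd ?_)
  have hsplit : (2 : ℝ) ^ (l + c) • B - A'
      = (2 : ℝ) ^ c • ((2 : ℝ) ^ l • B - A) + ((2 : ℝ) ^ c • A - A') := by
    rw [Real.rpow_add two_pos, mul_comm, mul_smul, smul_sub]
    abel
  show ((2 : ℝ) ^ (l + c) • B - A').PosSemidef
  rw [hsplit]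
  exact (hl.smul (by positivity)).add hle

end MaxDivergence

section MinEntropy

variable {α β : Type*} [Fintype α] [Fintype β] [DecidableEq α]

def hminSet (ρ : Matrix (α × β) (α × β) ℂ) : Set ℝ :=
  {x : ℝ | ∃ σ : Matrix β β ℂ, σ.PosSemidef ∧ σ.trace = 1 ∧
    x = dmax ρ ((1 : Matrix α α ℂ) ⊗ₖ σ)}

lemma hmin_eq_neg_sInf_hminSet [DecidableEq β] (ρ : Matrix (α × β) (α × β) ℂ) :
    hmin ρ = -sInf (hminSet ρ) := rfl

lemma trace_one_kronecker_of_trace_eq_one {σ : Matrix β β ℂ} (hσ : σ.trace = 1) :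
    ((1 : Matrix α α ℂ) ⊗ₖ σ).trace = (Fintype.card α : ℝ) := by
  simp [trace_kronecker, hσ]

lemma neg_logb_card_le_dmax {A : Matrix (α × β) (α × β) ℂ} (hA : A.trace = 1)
    {σ : Matrix β β ℂ} (hσ : σ.trace = 1) :
    -Real.logb 2 (Fintype.card α) ≤ dmax A ((1 : Matrix α α ℂ) ⊗ₖ σ) := by
  by_cases hne : (dmaxSet A ((1 : Matrix α α ℂ) ⊗ₖ σ)).Nonempty
  · exact le_csInf hne fun _ =>
      neg_logb_le_of_mem_dmaxSet hA (trace_one_kronecker_of_trace_eq_one hσ)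
  · rw [dmax_eq_zero_of_dmaxSet_eq_empty (Set.not_nonempty_iff_eq_empty.mp hne), neg_nonpos]
    exact div_nonneg (Real.log_natCast_nonneg _) (Real.log_nonneg one_le_two)

lemma bddBelow_hminSet {A : Matrix (α × β) (α × β) ℂ} (hA : A.trace = 1) :
    BddBelow (hminSet A) := by
  refine ⟨-Real.logb 2 (Fintype.card α), ?_⟩
  rintro _ ⟨σ, -, hσ, rfl⟩
  exact neg_logb_card_le_dmax hA hσ

lemma hminSet_nonempty [DecidableEq β] [Nonempty β] (A : Matrix (α × β) (α × β) ℂ) :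
    (hminSet A).Nonempty := by
  refine ⟨_, (Fintype.card β : ℝ)⁻¹ • 1, PosSemidef.one.smul (by positivity), ?_, rfl⟩
  rw [trace_smul, trace_one, ← Complex.coe_smul, smul_eq_mul]
  push_cast
  exact inv_mul_cancel₀ (by exact_mod_cast Fintype.card_ne_zero)

lemma dmaxSet_nonempty_of_subsingleton [DecidableEq β] [Subsingleton β]
    {A : Matrix (α × β) (α × β) ℂ} (hA : A.PosSemidef) (hAtr : A.trace = 1)
    {σ : Matrix β β ℂ} (hσ : σ.trace = 1) :
    (dmaxSet A ((1 : Matrix α α ℂ) ⊗ₖ σ)).Nonempty := by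
  have hσ1 : σ = 1 := by
    ext i j
    obtain rfl := Subsingleton.elim i j
    rw [one_apply_eq, ← hσ, trace, Fintype.sum_subsingleton _ i, diag_apply]
  refine ⟨0, ?_⟩
  simpa [dmaxSet, hσ1] using hA.one_sub_of_trace_eq_one hAtr

lemma exists_dmaxSet_eq_empty [DecidableEq β] [Nontrivial β] {A : Matrix (α × β) (α × β) ℂ}
    (hA : A.PosSemidef) (htr : A.trace ≠ 0) :
    ∃ σ : Matrix β β ℂ, σ.PosSemidef ∧ σ.trace = 1 ∧
      dmaxSet A ((1 : Matrix α α ℂ) ⊗ₖ σ) = ∅ := by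
  obtain ⟨⟨a, b⟩, -, hab⟩ := Finset.exists_ne_zero_of_sum_ne_zero htr
  obtain ⟨b', hb'⟩ := exists_ne b
  refine ⟨diagonal (Pi.single b' 1), PosSemidef.diagonal (Pi.single_nonneg.mpr zero_le_one),
    by simp [trace_diagonal], Set.eq_empty_of_forall_notMem fun l hl => hab ?_⟩
  have hdiag := hl.diag_nonneg (i := (a, b))
  simp only [Matrix.sub_apply, Matrix.smul_apply, kroneckerMap_apply, one_apply_eq,
    diagonal_apply_eq, Pi.single_eq_of_ne hb'.symm, mul_zero, smul_zero, zero_sub,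
    Left.nonneg_neg_iff] at hdiag
  exact le_antisymm hdiag hA.diag_nonneg

theorem hmin_sub_le_hmin_of_le_smul [DecidableEq β] {A A' : Matrix (α × β) (α × β) ℂ}
    (hA : A.PosSemidef) (hAtr : A.trace = 1) (hA' : A'.PosSemidef) (hA'tr : A'.trace = 1)
    {c : ℝ} (hc : 0 ≤ c) (hle : ((2 : ℝ) ^ c • A - A').PosSemidef) :
    hmin A - c ≤ hmin A' := by
  have : Nonempty β := by
    by_contra h
    rw [not_nonempty_iff] at h
    simp [trace] at hAtr
  rw [hmin_eq_neg_sInf_hminSet, hmin_eq_neg_sInf_hminSet]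
  suffices sInf (hminSet A') ≤ sInf (hminSet A) + c by linarith
  rw [← sub_le_iff_le_add]
  refine le_csInf (hminSet_nonempty A) ?_
  rintro _ ⟨σ, hσ, hσtr, rfl⟩
  rw [sub_le_iff_le_add]
  -- `dmax` is `0` when no `λ` is feasible. Then either `β` is trivial and `λ = 0` is feasible
  -- after all (`A ≤ 1`), or a pure `σ'` missing a diagonal entry of `A'` makes `dmax A' _ = 0`.
  by_cases hne : (dmaxSet A ((1 : Matrix α α ℂ) ⊗ₖ σ)).Nonempty
  · calc sInf (hminSet A') ≤ dmax A' ((1 : Matrix α α ℂ) ⊗ₖ σ) :=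
          csInf_le (bddBelow_hminSet hA'tr) ⟨σ, hσ, hσtr, rfl⟩
      _ ≤ _ := dmax_le_dmax_add hle hne
          (bddBelow_dmaxSet hA'tr (trace_one_kronecker_of_trace_eq_one hσtr))
  · rw [dmax_eq_zero_of_dmaxSet_eq_empty (Set.not_nonempty_iff_eq_empty.mp hne), zero_add]
    rcases subsingleton_or_nontrivial β with _ | _
    · exact absurd (dmaxSet_nonempty_of_subsingleton hA hAtr hσtr) hne
    · obtain ⟨σ', hσ', hσ'tr, hempty⟩ := exists_dmaxSet_eq_empty hA' (by simp [hA'tr])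
      calc sInf (hminSet A') ≤ dmax A' ((1 : Matrix α α ℂ) ⊗ₖ σ') :=
            csInf_le (bddBelow_hminSet hA'tr) ⟨σ', hσ', hσ'tr, rfl⟩
        _ = 0 := dmax_eq_zero_of_dmaxSet_eq_empty hempty
        _ ≤ c := hc

end MinEntropy

/-- Conditioning on a measurement outcome on `C` decreases the conditional
min-entropy `H_min(A|B)` by at most `log(1/p)`, where `p` is the outcome
probability. -/
theorem hmin_measurement_penalty {α β γ : Type*}
    [Fintype α] [DecidableEq α] [Fintype β] [DecidableEq β] [Fintype γ] [DecidableEq γ]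
    (ρ : Matrix ((α × β) × γ) ((α × β) × γ) ℂ)
    (hρ : ρ.PosSemidef) (hρtr : ρ.trace = 1)
    (M : Matrix γ γ ℂ)
    (hM : ((1 : Matrix γ γ ℂ) - Mᴴ * M).PosSemidef)
    (p : ℝ) (hp : 0 < p)
    (htr : (((1 : Matrix (α × β) (α × β) ℂ) ⊗ₖ M) * ρ *
        ((1 : Matrix (α × β) (α × β) ℂ) ⊗ₖ M)ᴴ).trace = (p : ℂ)) :
    hmin (ptraceRight (((p : ℂ))⁻¹ •
        (((1 : Matrix (α × β) (α × β) ℂ) ⊗ₖ M) * ρ *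
          ((1 : Matrix (α × β) (α × β) ℂ) ⊗ₖ M)ᴴ)))
      ≥ hmin (ptraceRight ρ) - Real.logb 2 (1 / p) := by
  set P := ptraceRight (((1 : Matrix (α × β) (α × β) ℂ) ⊗ₖ M) * ρ *
    ((1 : Matrix (α × β) (α × β) ℂ) ⊗ₖ M)ᴴ)
  have hP : P.PosSemidef := posSemidef_ptraceRight (hρ.mul_mul_conjTranspose_same _)
  have hPtr : P.trace = p := (trace_ptraceRight _).trans htr
  have hρtr' : (ptraceRight ρ).trace = 1 := (trace_ptraceRight ρ).trans hρtr
  have hle : (ptraceRight ρ - P).PosSemidef := posSemidef_ptraceRight_sub_conj hρ hM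
  have hp1 : p ≤ 1 := by
    have := hle.trace_nonneg
    rwa [trace_sub, hρtr', hPtr, sub_nonneg, ← Complex.ofReal_one, Complex.real_le_real] at this
  have hp' : (0 : ℝ) ≤ p⁻¹ := inv_nonneg.mpr hp.le
  rw [ptraceRight_smul, ← Complex.ofReal_inv, Complex.coe_smul]
  refine hmin_sub_le_hmin_of_le_smul (posSemidef_ptraceRight hρ) hρtr' (hP.smul hp') ?_
    (Real.logb_nonneg one_lt_two (one_le_one_div hp hp1)) ?_
  · rw [trace_smul, hPtr, ← Complex.coe_smul, smul_eq_mul, Complex.ofReal_inv,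
      inv_mul_cancel₀ (by exact_mod_cast hp.ne')]
  · rw [Real.rpow_logb two_pos (by norm_num) (by positivity), one_div, ← smul_sub]
    exact hle.smul hp'
end

section
/- Projected states stay close: for density matrices ρ, σ and a projector Π, Tr(Πρ) · ‖ (ΠρΠ)/Tr(Πρ) − (ΠσΠ)/Tr(Πσ) ‖₁ ≤ ‖ρ − σ‖₁ (whenever Tr(Πρ), Tr(Πσ) > 0). -/
open Matrix
open scoped ComplexOrder

/-- The positive semidefinite square root of a positive semidefinite matrix
(the former `Matrix.PosSemidef.sqrt`, removed from Mathlib). -/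
noncomputable def posSemidefSqrt {n : Type*} [Fintype n] [DecidableEq n] {A : Matrix n n ℂ}
    (hA : A.PosSemidef) : Matrix n n ℂ :=
  (hA.1.eigenvectorUnitary : Matrix n n ℂ) * diagonal ((↑) ∘ (√·) ∘ hA.1.eigenvalues) *
    (star hA.1.eigenvectorUnitary : Matrix n n ℂ)

/-- Trace norm (Schatten 1-norm): `‖A‖₁ = Tr √(Aᴴ A)`. -/
noncomputable def traceNorm {n : Type*} [Fintype n] [DecidableEq n]
    (A : Matrix n n ℂ) : ℝ :=
  (posSemidefSqrt (Matrix.posSemidef_conjTranspose_mul_self A)).trace.re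

/-! Write `ρ - σ = X - Y` with `X = (ρ - σ)⁺` and `Y = (ρ - σ)⁻`, so that `‖ρ - σ‖₁ = Tr X + Tr Y`
and `Tr X = Tr Y`. Multiplied by `p`, the renormalized difference becomes
`P (ρ - σ) P + (1 - p / q) P σ P`, whose trace norm is at most `‖P (ρ - σ) P‖₁ + |q - p|`.
With `x = Tr (P X) ≤ Tr X` and `y = Tr (P Y) ≤ Tr Y`, the first term is at most `x + y` and
`q - p = y - x`, so the total is at most `2 max x y ≤ Tr X + Tr Y`.

The bound `‖X - Y‖₁ ≤ Tr X + Tr Y` for positive `X, Y` comes from pairing `X - Y` with its sign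
`S = sgn (X - Y)`: `‖X - Y‖₁ = Tr (S (X - Y))` and `-1 ≤ S ≤ 1`. -/

lemma ofReal_smul_inv_smul_sub_inv_smul {M : Type*} [AddCommGroup M] [Module ℂ M] (A B : M)
    {p : ℝ} (hp : p ≠ 0) (q : ℝ) :
    (p : ℂ) • ((p : ℂ)⁻¹ • A - (q : ℂ)⁻¹ • B) = A - B + ((1 - p / q : ℝ) : ℂ) • B := by
  have hp' : (p : ℂ) ≠ 0 := by exact_mod_cast hp
  rw [smul_sub, smul_smul, smul_smul, mul_inv_cancel₀ hp', one_smul]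
  push_cast
  module

section TraceNorm

open scoped MatrixOrder

variable {n : Type*} [Fintype n] [DecidableEq n]

lemma posSemidefSqrt_eq_cfcSqrt {A : Matrix n n ℂ} (hA : A.PosSemidef) :
    posSemidefSqrt hA = CFC.sqrt A := by
  rw [CFC.sqrt_eq_cfc, cfc_nnreal_eq_real _ A hA.nonneg, hA.1.cfc_eq]
  simp only [IsHermitian.cfc, Unitary.conjStarAlgAut_apply, posSemidefSqrt]
  congr 3
  funext i
  simp [Real.coe_toNNReal', max_eq_left (hA.eigenvalues_nonneg i)]

lemma traceNorm_eq_re_trace_cfcAbs (A : Matrix n n ℂ) : traceNorm A = (CFC.abs A).trace.re := by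
  rw [traceNorm, posSemidefSqrt_eq_cfcSqrt]
  rfl

lemma traceNorm_of_posSemidef {A : Matrix n n ℂ} (hA : A.PosSemidef) :
    traceNorm A = A.trace.re := by
  rw [traceNorm_eq_re_trace_cfcAbs, CFC.abs_of_nonneg A hA.nonneg]

lemma traceNorm_smul (c : ℂ) (A : Matrix n n ℂ) : traceNorm (c • A) = ‖c‖ * traceNorm A := by
  rw [traceNorm_eq_re_trace_cfcAbs, traceNorm_eq_re_trace_cfcAbs, CFC.abs_smul, trace_smul,
    Complex.real_smul, Complex.re_ofReal_mul]

lemma Matrix.IsHermitian.traceNorm_eq_posPart_add_negPart {H : Matrix n n ℂ} (hH : H.IsHermitian) :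
    traceNorm H = (H⁺).trace.re + (H⁻).trace.re := by
  rw [traceNorm_eq_re_trace_cfcAbs, ← CFC.posPart_add_negPart H hH, trace_add, Complex.add_re]

lemma Matrix.PosSemidef.re_trace_mul_nonneg {A B : Matrix n n ℂ} (hB : B.PosSemidef)
    (hA : 0 ≤ A) : 0 ≤ (A * B).trace.re := by
  obtain ⟨S, rfl⟩ := CStarAlgebra.nonneg_iff_eq_star_mul_self.mp hA
  rw [mul_assoc, trace_mul_comm, star_eq_conjTranspose]
  exact (Complex.nonneg_iff.mp (hB.mul_mul_conjTranspose_same S).trace_nonneg).1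

lemma Matrix.PosSemidef.re_trace_mul_le_of_le_one {S X : Matrix n n ℂ} (hX : X.PosSemidef)
    (hS : S ≤ 1) : (S * X).trace.re ≤ X.trace.re := by
  have h := hX.re_trace_mul_nonneg (sub_nonneg.mpr hS)
  rw [sub_mul, one_mul, trace_sub, Complex.sub_re] at h
  linarith

lemma Matrix.IsHermitian.traceNorm_eq_re_trace_sign_mul {H : Matrix n n ℂ} (hH : H.IsHermitian) :
    traceNorm H = (cfc (fun x : ℝ ↦ (SignType.sign x : ℝ)) H * H).trace.re := by
  have h : cfc (fun x : ℝ ↦ (SignType.sign x : ℝ) * x) H =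
      cfc (fun x : ℝ ↦ (SignType.sign x : ℝ)) H * H := by
    rw [cfc_mul _ _ H ((Set.toFinite _).continuousOn _), cfc_id' ℝ H]
  rw [traceNorm_eq_re_trace_cfcAbs, CFC.abs_eq_cfc_norm H hH, ← h]
  simp_rw [sign_mul_self, Real.norm_eq_abs]

lemma traceNorm_sub_le {X Y : Matrix n n ℂ} (hX : X.PosSemidef) (hY : Y.PosSemidef) :
    traceNorm (X - Y) ≤ X.trace.re + Y.trace.re := by
  set S := cfc (fun x : ℝ ↦ (SignType.sign x : ℝ)) (X - Y)
  have hS : S ≤ 1 := cfc_le_one _ _ fun x _ ↦ by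
    rcases lt_trichotomy x 0 with h | h | h <;> simp [h]
  have hnegS : -S ≤ 1 := by
    rw [← cfc_neg]
    exact cfc_le_one _ _ fun x _ ↦ by rcases lt_trichotomy x 0 with h | h | h <;> simp [h]
  rw [(hX.1.sub hY.1).traceNorm_eq_re_trace_sign_mul, mul_sub, trace_sub, Complex.sub_re,
    sub_eq_add_neg, ← Complex.neg_re, ← trace_neg, ← neg_mul]
  exact add_le_add (hX.re_trace_mul_le_of_le_one hS) (hY.re_trace_mul_le_of_le_one hnegS)

lemma traceNorm_add_le {H K : Matrix n n ℂ} (hH : H.IsHermitian) (hK : K.IsHermitian) :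
    traceNorm (H + K) ≤ traceNorm H + traceNorm K := by
  have hHK : H + K = (H⁺ + K⁺) - (H⁻ + K⁻) := by
    nth_rw 1 [← CFC.posPart_sub_negPart H hH, ← CFC.posPart_sub_negPart K hK]
    abel
  have hpos (A : Matrix n n ℂ) : (A⁺).PosSemidef := (CFC.posPart_nonneg A).posSemidef
  have hneg (A : Matrix n n ℂ) : (A⁻).PosSemidef := (CFC.negPart_nonneg A).posSemidef
  rw [hHK, hH.traceNorm_eq_posPart_add_negPart, hK.traceNorm_eq_posPart_add_negPart]
  refine (traceNorm_sub_le ((hpos H).add (hpos K)) ((hneg H).add (hneg K))).trans_eq ?_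
  simp only [trace_add, Complex.add_re]
  ring

lemma traceNorm_compression_add_abs_re_trace_le {H P : Matrix n n ℂ} (hH : H.IsHermitian)
    (hH₀ : H.trace = 0) (hP : IsStarProjection P) :
    traceNorm (P * H * P) + |(P * H).trace.re| ≤ traceNorm H := by
  have hPP : P * P = P := hP.isIdempotentElem
  have hPstar : Pᴴ = P := hP.isSelfAdjoint
  have hX : (H⁺).PosSemidef := (CFC.posPart_nonneg H).posSemidef
  have hY : (H⁻).PosSemidef := (CFC.negPart_nonneg H).posSemidef
  have hHXY : H = H⁺ - H⁻ := (CFC.posPart_sub_negPart H hH).symm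
  have hcompress (A : Matrix n n ℂ) : (P * A * P).trace = (P * A).trace := by
    rw [trace_mul_cycle, hPP]
  have hsandwich {A : Matrix n n ℂ} (hA : A.PosSemidef) : (P * A * P).PosSemidef := by
    simpa [hPstar] using hA.mul_mul_conjTranspose_same P
  have hbalanced : (H⁺).trace.re = (H⁻).trace.re := by
    have := congrArg Complex.re hH₀
    rw [hHXY, trace_sub, Complex.sub_re, Complex.zero_re] at this
    linarith
  have hnorm : traceNorm (P * H * P) ≤ (P * H⁺).trace.re + (P * H⁻).trace.re := by
    have := traceNorm_sub_le (hsandwich hX) (hsandwich hY)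
    rwa [← sub_mul, ← mul_sub, ← hHXY, hcompress, hcompress] at this
  have htrace : (P * H).trace.re = (P * H⁺).trace.re - (P * H⁻).trace.re := by
    rw [hHXY, mul_sub, trace_sub, Complex.sub_re, ← hHXY]
  have hX₀ := hX.re_trace_mul_nonneg hP.nonneg
  have hY₀ := hY.re_trace_mul_nonneg hP.nonneg
  have hX₁ := hX.re_trace_mul_le_of_le_one hP.le_one
  have hY₁ := hY.re_trace_mul_le_of_le_one hP.le_one
  rw [hH.traceNorm_eq_posPart_add_negPart, htrace]
  rcases abs_cases ((P * H⁺).trace.re - (P * H⁻).trace.re) with ⟨h, -⟩ | ⟨h, -⟩ <;> linarith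

end TraceNorm

/-- Projected (renormalized) states stay close:
`Tr(Pρ) ‖PρP/Tr(Pρ) − PσP/Tr(Pσ)‖₁ ≤ ‖ρ − σ‖₁` for a projector `P` and
density matrices `ρ, σ` with positive projection probabilities. -/
theorem projected_states_close {n : Type*} [Fintype n] [DecidableEq n]
    (ρ σ P : Matrix n n ℂ)
    (hρ : ρ.PosSemidef) (hρtr : ρ.trace = 1)
    (hσ : σ.PosSemidef) (hσtr : σ.trace = 1)
    (hPherm : Pᴴ = P) (hPidem : P * P = P)
    (p q : ℝ) (hp : 0 < p) (hq : 0 < q)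
    (hptr : (P * ρ).trace = (p : ℂ)) (hqtr : (P * σ).trace = (q : ℂ)) :
    p * traceNorm (((p : ℂ))⁻¹ • (P * ρ * P) - ((q : ℂ))⁻¹ • (P * σ * P))
      ≤ traceNorm (ρ - σ) := by
  have hP : IsStarProjection P := ⟨hPidem, hPherm⟩
  have hH : (ρ - σ).IsHermitian := hρ.1.sub hσ.1
  have hPσP : (P * σ * P).PosSemidef := by simpa [hPherm] using hσ.mul_mul_conjTranspose_same P
  have hPHP : (P * (ρ - σ) * P).IsHermitian := by
    simpa [hPherm] using isHermitian_mul_mul_conjTranspose P hH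
  have hgap : |1 - p / q| * q = |(P * (ρ - σ)).trace.re| :=
    calc |1 - p / q| * q = |(1 - p / q) * q| := by rw [abs_mul, abs_of_pos hq]
      _ = |(P * (ρ - σ)).trace.re| := by
        rw [sub_mul, one_mul, div_mul_cancel₀ _ hq.ne', mul_sub, trace_sub, hptr, hqtr,
          ← Complex.ofReal_sub, Complex.ofReal_re, abs_sub_comm]
  calc p * traceNorm (((p : ℂ))⁻¹ • (P * ρ * P) - ((q : ℂ))⁻¹ • (P * σ * P))
      = traceNorm (P * (ρ - σ) * P + ((1 - p / q : ℝ) : ℂ) • (P * σ * P)) := by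
        rw [mul_sub, sub_mul, ← ofReal_smul_inv_smul_sub_inv_smul _ _ hp.ne', traceNorm_smul,
          Complex.norm_real, Real.norm_of_nonneg hp.le]
    _ ≤ traceNorm (P * (ρ - σ) * P) + traceNorm (((1 - p / q : ℝ) : ℂ) • (P * σ * P)) :=
        traceNorm_add_le hPHP (hPσP.1.smul (Complex.conj_ofReal _))
    _ = traceNorm (P * (ρ - σ) * P) + |(P * (ρ - σ)).trace.re| := by
        rw [traceNorm_smul, traceNorm_of_posSemidef hPσP, trace_mul_cycle, hPidem, hqtr,
          Complex.norm_real, Real.norm_eq_abs, Complex.ofReal_re, hgap]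
    _ ≤ traceNorm (ρ - σ) :=
        traceNorm_compression_add_abs_re_trace_le hH (by rw [trace_sub, hρtr, hσtr, sub_self]) hP
end

section
/- One-time MAC soundness for the polynomial-evaluation construction: there is a family MAC: {0,1}^{2t} × {0,1}^m → {0,1}^t with t = log m + log(1/ε) such that for every deterministic adversary A: {0,1}^m × {0,1}^t → {0,1}^m × {0,1}^t and every message μ, the probability over a uniform key k that A(μ, MAC(k,μ)) outputs (μ', σ') with μ' ≠ μ and MAC(k, μ') = σ' is at most ε. -/
open Finset Polynomial

section AuxMac

variable {F : Type*} [Field F]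

/-- The polynomial associated to a message: bits as coefficients of `X^(i+1)`. -/
noncomputable def macPoly (m : ℕ) (μ : Fin m → Fin 2) : F[X] :=
  ∑ i : Fin m, Polynomial.C (((μ i : ℕ) : F)) * Polynomial.X ^ ((i : ℕ) + 1)

lemma macPoly_coeff (m : ℕ) (μ : Fin m → Fin 2) (j : Fin m) :
    (macPoly m μ : F[X]).coeff ((j : ℕ) + 1) = ((μ j : ℕ) : F) := by
  classical
  unfold macPoly
  rw [Polynomial.finset_sum_coeff]
  rw [Finset.sum_eq_single j]
  · simp
  · intro i _ hij
    rw [Polynomial.coeff_C_mul, Polynomial.coeff_X_pow, if_neg, mul_zero]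
    intro h
    exact hij (Fin.ext (by omega))
  · simp

lemma bitcast_inj (b b' : Fin 2) (h : ((b : ℕ) : F) = ((b' : ℕ) : F)) : b = b' := by
  fin_cases b <;> fin_cases b' <;> simp_all

lemma macPoly_natDegree_le (m : ℕ) (μ : Fin m → Fin 2) :
    (macPoly m μ : F[X]).natDegree ≤ m := by
  unfold macPoly
  refine Polynomial.natDegree_sum_le_of_forall_le _ _ ?_
  intro i _
  refine le_trans (Polynomial.natDegree_C_mul_le _ _) ?_
  simpa using Nat.succ_le_of_lt i.isLt

end AuxMac

/-- One-time MAC soundness (polynomial-evaluation construction): for every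
message length `m ≥ 1` and tag length `t`, there is a MAC family
`MAC : {0,1}^{2t} × {0,1}^m → {0,1}^t` such that for every deterministic
adversary `A` and every message `μ`, the probability over a uniform key `k`
that `A(μ, MAC(k,μ))` outputs `(μ', σ')` with `μ' ≠ μ` and `MAC(k,μ') = σ'`
is at most `ε = m / 2^t` (equivalently, `t = log m + log(1/ε)`). -/
theorem onetime_mac_exists (m t : ℕ) (hm : 1 ≤ m) :
    ∃ MAC : (Fin (2 * t) → Fin 2) → (Fin m → Fin 2) → (Fin t → Fin 2),
      ∀ (A : (Fin m → Fin 2) × (Fin t → Fin 2) → (Fin m → Fin 2) × (Fin t → Fin 2))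
        (μ : Fin m → Fin 2),
        ((Finset.univ.filter fun k : Fin (2 * t) → Fin 2 =>
            (A (μ, MAC k μ)).1 ≠ μ ∧ MAC k (A (μ, MAC k μ)).1 = (A (μ, MAC k μ)).2).card : ℝ)
            / (2 : ℝ) ^ (2 * t)
          ≤ (m : ℝ) / (2 : ℝ) ^ t := by
  classical
  rcases Nat.eq_zero_or_pos t with rfl | ht
  · -- trivial case t = 0
    refine ⟨fun _ _ => finZeroElim, fun A μ => ?_⟩
    have h1 : (Finset.univ.filter fun k : Fin (2 * 0) → Fin 2 =>
        (A (μ, finZeroElim)).1 ≠ μ ∧ finZeroElim = (A (μ, finZeroElim)).2).card ≤ 1 := by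
      refine le_trans (Finset.card_filter_le _ _) ?_
      simp [Fintype.card_fun]
    have : ((Finset.univ.filter fun k : Fin (2 * 0) → Fin 2 =>
        (A (μ, finZeroElim)).1 ≠ μ ∧ finZeroElim = (A (μ, finZeroElim)).2).card : ℝ) ≤ 1 := by
      exact_mod_cast h1
    simp only [Nat.mul_zero, pow_zero, div_one]
    calc _ ≤ (1 : ℝ) := this
    _ ≤ (m : ℝ) := by exact_mod_cast hm
  · -- main case t ≥ 1
    set F := GaloisField 2 t with hF
    haveI : Fintype F := Fintype.ofFinite F
    have hcard : Fintype.card F = 2 ^ t := by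
      rw [← Nat.card_eq_fintype_card]
      exact GaloisField.card 2 t ht.ne'
    -- equivalences
    have hce : Fintype.card (Fin t → Fin 2) = Fintype.card F := by
      simp [hcard]
    obtain ⟨e⟩ : Nonempty ((Fin t → Fin 2) ≃ F) := ⟨Fintype.equivOfCardEq hce⟩
    have hck : Fintype.card (Fin (2 * t) → Fin 2) = Fintype.card (F × F) := by
      simp [hcard, Fintype.card_prod, two_mul, pow_add]
    obtain ⟨ke⟩ : Nonempty ((Fin (2 * t) → Fin 2) ≃ F × F) := ⟨Fintype.equivOfCardEq hck⟩
    refine ⟨fun k μ => e.symm ((macPoly m μ : F[X]).eval (ke k).1 + (ke k).2), fun A μ => ?_⟩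
    set MAC : (Fin (2 * t) → Fin 2) → (Fin m → Fin 2) → Fin t → Fin 2 :=
      fun k μ => e.symm ((macPoly m μ : F[X]).eval (ke k).1 + (ke k).2) with hMAC
    set S := Finset.univ.filter fun k : Fin (2 * t) → Fin 2 =>
      (A (μ, MAC k μ)).1 ≠ μ ∧ MAC k (A (μ, MAC k μ)).1 = (A (μ, MAC k μ)).2 with hS
    -- adversary's outputs as a function of the tag σ
    set μ' : F → (Fin m → Fin 2) := fun σ => (A (μ, e.symm σ)).1 with hμ'
    set σ' : F → F := fun σ => e ((A (μ, e.symm σ)).2) with hσ'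
    set g : F → F[X] := fun σ =>
      macPoly m (μ' σ) - macPoly m μ + Polynomial.C (σ - σ' σ) with hg
    -- injection from keys to (a, σ) pairs
    set Φ : (Fin (2 * t) → Fin 2) → F × F :=
      fun k => ((ke k).1, (macPoly m μ : F[X]).eval (ke k).1 + (ke k).2) with hΦ
    have hΦinj : Function.Injective Φ := by
      intro k k' h
      simp only [hΦ, Prod.mk.injEq] at h
      obtain ⟨h1, h2⟩ := h
      rw [h1] at h2
      exact ke.injective (Prod.ext h1 (add_left_cancel h2))
    -- the bad set in (a, σ) coordinates
    set T := Finset.univ.filter fun p : F × F =>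
      μ' p.2 ≠ μ ∧ (g p.2).eval p.1 = 0 with hT
    have hmapsto : ∀ k ∈ S, Φ k ∈ T := by
      intro k hk
      rw [hS, Finset.mem_filter] at hk
      obtain ⟨-, hne, heq⟩ := hk
      rw [hT, Finset.mem_filter]
      have htag : MAC k μ = e.symm ((macPoly m μ : F[X]).eval (ke k).1 + (ke k).2) := rfl
      refine ⟨Finset.mem_univ _, ?_, ?_⟩
      · exact hne
      · have : (macPoly m ((A (μ, MAC k μ)).1) : F[X]).eval (ke k).1 + (ke k).2
            = e ((A (μ, MAC k μ)).2) := by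
          have := congrArg e heq
          simpa [hMAC] using this
        simp only [hg, hΦ, hμ', hσ', htag, Polynomial.eval_add, Polynomial.eval_sub,
          Polynomial.eval_C]
        rw [htag] at this
        linear_combination this
    have hcardST : S.card ≤ T.card := Finset.card_le_card_of_injOn Φ hmapsto
      (Function.Injective.injOn hΦinj)
    -- fiberwise count: for each σ at most m roots
    have hfiber : ∀ σ : F, (T.filter fun p : F × F => p.2 = σ).card ≤ m := by
      intro σ
      by_cases hne : μ' σ ≠ μ
      · -- g σ is a nonzero polynomial of degree ≤ m
        have hgne : g σ ≠ 0 := by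
          obtain ⟨j, hj⟩ := Function.ne_iff.mp hne
          intro h0
          have := congrArg (fun q : F[X] => q.coeff ((j : ℕ) + 1)) h0
          simp only [hg, Polynomial.coeff_add, Polynomial.coeff_sub, macPoly_coeff,
            Polynomial.coeff_C, Polynomial.coeff_zero] at this
          rw [if_neg (by omega)] at this
          apply hj
          apply bitcast_inj (F := F)
          have h' : ((μ' σ j : ℕ) : F) - ((μ j : ℕ) : F) = 0 := by linear_combination this
          linear_combination h'
        have hdeg : (g σ).natDegree ≤ m := by
          refine le_trans (Polynomial.natDegree_add_le _ _) ?_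
          simp only [Polynomial.natDegree_C, max_le_iff]
          constructor
          · exact le_trans (Polynomial.natDegree_sub_le _ _)
              (max_le (macPoly_natDegree_le m _) (macPoly_natDegree_le m _))
          · exact Nat.zero_le m
        -- inject fiber into roots
        have hsub : (T.filter fun p : F × F => p.2 = σ).image Prod.fst ⊆
            (g σ).roots.toFinset := by
          intro a ha
          rw [Finset.mem_image] at ha
          obtain ⟨p, hp, rfl⟩ := ha
          rw [Finset.mem_filter] at hp
          obtain ⟨hpT, hpσ⟩ := hp
          rw [hT, Finset.mem_filter] at hpT
          rw [Multiset.mem_toFinset, Polynomial.mem_roots hgne]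
          rw [hpσ] at hpT
          exact hpT.2.2
        have hinj2 : ((T.filter fun p : F × F => p.2 = σ).image Prod.fst).card
            = (T.filter fun p : F × F => p.2 = σ).card := by
          refine Finset.card_image_of_injOn ?_
          intro p hp q hq hpq
          simp only [Finset.mem_coe, Finset.mem_filter] at hp hq
          exact Prod.ext hpq (hp.2.trans hq.2.symm)
        calc (T.filter fun p : F × F => p.2 = σ).card
            = ((T.filter fun p : F × F => p.2 = σ).image Prod.fst).card := hinj2.symm
          _ ≤ (g σ).roots.toFinset.card := Finset.card_le_card hsub
          _ ≤ Multiset.card (g σ).roots := Multiset.toFinset_card_le _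
          _ ≤ (g σ).natDegree := Polynomial.card_roots' _
          _ ≤ m := hdeg
      · push_neg at hne
        have : (T.filter fun p : F × F => p.2 = σ) = ∅ := by
          rw [Finset.eq_empty_iff_forall_notMem]
          intro p hp
          rw [Finset.mem_filter] at hp
          obtain ⟨hpT, hpσ⟩ := hp
          rw [hT, Finset.mem_filter] at hpT
          rw [hpσ] at hpT
          exact hpT.2.1 hne
        simp [this]
    have hTcard : T.card ≤ 2 ^ t * m := by
      rw [Finset.card_eq_sum_card_fiberwise (f := Prod.snd) (t := Finset.univ)
        (fun p _ => Finset.mem_univ _)]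
      calc ∑ σ : F, (T.filter fun p : F × F => p.2 = σ).card
          ≤ ∑ _σ : F, m := Finset.sum_le_sum fun σ _ => hfiber σ
        _ = 2 ^ t * m := by simp [hcard, Finset.sum_const, mul_comm]
    have hScard : S.card ≤ 2 ^ t * m := le_trans hcardST hTcard
    -- final arithmetic
    have hpos : (0 : ℝ) < (2 : ℝ) ^ (2 * t) := by positivity
    rw [div_le_div_iff₀ hpos (by positivity)]
    have h2t : (2 : ℝ) ^ (2 * t) = (2 : ℝ) ^ t * (2 : ℝ) ^ t := by
      rw [two_mul, pow_add]
    have hs : (S.card : ℝ) ≤ 2 ^ t * m := by exact_mod_cast hScard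
    calc (S.card : ℝ) * (2 : ℝ) ^ t ≤ ((2:ℝ) ^ t * m) * (2 : ℝ) ^ t :=
          mul_le_mul_of_nonneg_right hs (by positivity)
      _ = (m : ℝ) * (2 : ℝ) ^ (2 * t) := by rw [h2t]; ring
end
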